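/- arXiv:0809.1848 — 2 statements merged into one kernel-verified Lean document; each statement's English description precedes it below -/
import Mathlib

section
/- There exists a universal constant C > 0 such that for every integer N ≥ 1 (with m = N + 1/2) and every x with 0 < x ≤ πm: |f(x) − g(x)| ≤ C/m and |f'(x) − g'(x)| ≤ C·( x/m² + 1/(m·x) ); moreover for 0 < x < 1 one has the sharper bound |f'(x) − g'(x)| ≤ C·x/m. -/
open MeasureTheory Filter Real Topology

/-- `m = N + 1/2`. -/
noncomputable def mval (N : ℕ) : ℝ := (N : ℝ) + 1 / 2

/-- The scaled covariance function `f(x) = (1/N)Σ_{n=1}^N cos(nx/m)`. -/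
noncomputable def f (N : ℕ) (x : ℝ) : ℝ :=
  (1 / N) * ∑ n ∈ Finset.Icc 1 N, Real.cos (n * x / mval N)

/-- `g(x) = sin x / x`. -/
noncomputable def g (x : ℝ) : ℝ := Real.sin x / x

/-!
Summing the Dirichlet kernel gives, with `s = x / (2m)`, `f(x) = (sin x / sin s - 1) / (2N)`.
Split `1 / sin s = 1 / s + h(s)`, where `h = cscSubInv` satisfies `|h(s)| ≤ s / 3` and
`|h'(s)| ≤ 2` on `(0, π/2]`. Since `2m = 2N + 1`, this gives
`f - g = (g - 1 + sin x · h(s)) / (2N)` and `f' - g' = (g' + cos x · h(s) + sin x · h'(s) / (2m)) / (2N)`.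
As `2N ≥ m`, the bounds follow from `|g - 1| ≤ 2`, `|g'(x)| ≤ min (2 / x) (x / 2)` and `|sin x| ≤ x`.
-/

theorem mval_pos (N : ℕ) : 0 < mval N := by
  unfold mval; positivity

theorem one_le_mval {N : ℕ} (hN : 1 ≤ N) : 1 ≤ mval N := by
  have : (1 : ℝ) ≤ N := by exact_mod_cast hN
  unfold mval; linarith

theorem mem_Ioo_of_le_pi_mul_mval {N : ℕ} {x : ℝ} (hx0 : 0 < x) (hx : x ≤ π * mval N) :
    x ∈ Set.Ioo 0 (2 * π * mval N) :=
  ⟨hx0, by nlinarith [pi_pos, mval_pos N]⟩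

theorem div_two_mval_mem_Ioc {N : ℕ} {x : ℝ} (hx0 : 0 < x) (hx : x ≤ π * mval N) :
    x / (2 * mval N) ∈ Set.Ioc 0 (π / 2) := by
  have hm := mval_pos N
  refine ⟨by positivity, ?_⟩
  rw [div_le_iff₀ (by positivity)]
  linarith

theorem sin_div_two_mval_pos {N : ℕ} {x : ℝ} (hx : x ∈ Set.Ioo 0 (2 * π * mval N)) :
    0 < sin (x / (2 * mval N)) := by
  have hm := mval_pos N
  refine sin_pos_of_pos_of_lt_pi (div_pos hx.1 (by positivity)) ?_
  rw [div_lt_iff₀ (by positivity)]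
  linarith [hx.2]

theorem abs_div_two_mul_le_div_mval {N : ℕ} (hN : 1 ≤ N) {a b : ℝ} (hab : |a| ≤ b) :
    |a / (2 * N)| ≤ b / mval N := by
  have : (1 : ℝ) ≤ N := by exact_mod_cast hN
  rw [abs_div, abs_of_pos (by linarith : (0 : ℝ) < 2 * N)]
  exact div_le_div₀ ((abs_nonneg a).trans hab) hab (mval_pos N) (by unfold mval; linarith)

theorem half_le_sin {s : ℝ} (h0 : 0 ≤ s) (h1 : s ≤ π / 2) : s / 2 ≤ sin s := by
  have hπ : 1 / 2 ≤ 2 / π := by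
    rw [div_le_div_iff₀ two_pos pi_pos]
    linarith [pi_le_four]
  linarith [mul_le_sin h0 h1, mul_le_mul_of_nonneg_right hπ h0]

theorem two_mul_sin_half_mul_sum_cos (N : ℕ) (t : ℝ) :
    2 * sin (t / 2) * ∑ n ∈ Finset.Icc 1 N, cos (n * t) = sin ((N + 1 / 2) * t) - sin (t / 2) := by
  induction N with
  | zero => simp [div_eq_inv_mul]
  | succ k ih =>
    have h := two_mul_sin_mul_cos (t / 2) ((k + 1) * t)
    rw [show t / 2 - (k + 1) * t = -((k + 1 / 2) * t) by ring,
      show t / 2 + (k + 1) * t = (k + 1 + 1 / 2) * t by ring, sin_neg] at h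
    rw [Finset.sum_Icc_succ_top (by omega)]
    push_cast
    linear_combination ih + h

theorem abs_g_sub_one_le (x : ℝ) : |g x - 1| ≤ 2 := by
  have : |g x| ≤ 1 := by
    rw [g, abs_div]
    exact div_le_one_of_le₀ abs_sin_le_abs (abs_nonneg x)
  linarith [abs_sub (g x) 1, abs_one (α := ℝ)]

theorem hasDerivAt_g {x : ℝ} (hx : x ≠ 0) : HasDerivAt g ((x * cos x - sin x) / x ^ 2) x := by
  refine ((hasDerivAt_sin x).div (hasDerivAt_id x) hx).congr_deriv ?_
  simp only [id]
  ring

theorem abs_deriv_g_le_two_div {x : ℝ} (hx : 0 < x) : |deriv g x| ≤ 2 / x := by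
  rw [(hasDerivAt_g hx.ne').deriv, abs_div, abs_of_pos (pow_pos hx 2),
    div_le_div_iff₀ (pow_pos hx 2) hx]
  have : |x * cos x - sin x| ≤ 2 * x := by
    calc |x * cos x - sin x| ≤ |x * cos x| + |sin x| := abs_sub _ _
    _ ≤ x + x := by
      gcongr
      · rw [abs_mul, abs_of_pos hx]; nlinarith [abs_cos_le_one x]
      · simpa [abs_of_pos hx] using abs_sin_le_abs (x := x)
    _ = 2 * x := by ring
  nlinarith

theorem abs_deriv_g_le_half {x : ℝ} (hx : 0 < x) : |deriv g x| ≤ x / 2 := by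
  rw [(hasDerivAt_g hx.ne').deriv, abs_div, abs_of_pos (pow_pos hx 2),
    div_le_div_iff₀ (pow_pos hx 2) two_pos]
  have : |x * cos x - sin x| ≤ x ^ 3 / 2 := by
    rw [abs_le]
    constructor
    · nlinarith [mul_le_mul_of_nonneg_left (one_sub_sq_div_two_le_cos (x := x)) hx.le, sin_le hx.le]
    · nlinarith [mul_le_mul_of_nonneg_left (cos_le_one x) hx.le, sin_ge_sub_cube hx.le, pow_pos hx 3]
  nlinarith

noncomputable def cscSubInv (s : ℝ) : ℝ := 1 / sin s - 1 / s

theorem hasDerivAt_cscSubInv {s : ℝ} (hs : sin s ≠ 0) :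
    HasDerivAt cscSubInv (1 / s ^ 2 - cos s / sin s ^ 2) s := by
  have hs0 : s ≠ 0 := by rintro rfl; simp at hs
  refine (((hasDerivAt_const s 1).div (hasDerivAt_sin s) hs).sub
    ((hasDerivAt_const s 1).div (hasDerivAt_id s) hs0)).congr_deriv ?_
  simp only [id]
  ring

theorem abs_cscSubInv_le {s : ℝ} (h0 : 0 < s) (h1 : s ≤ π / 2) : |cscSubInv s| ≤ s / 3 := by
  have hsin := half_le_sin h0.le h1
  have hsin0 : 0 < sin s := by linarith
  have heq : cscSubInv s = (s - sin s) / (s * sin s) := by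
    rw [cscSubInv]; field_simp
  rw [heq, abs_div, abs_of_nonneg (by linarith [sin_le h0.le]), abs_of_pos (by positivity),
    div_le_div_iff₀ (by positivity) three_pos]
  nlinarith [sin_ge_sub_cube h0.le, mul_le_mul_of_nonneg_left hsin (sq_nonneg s)]

theorem abs_deriv_cscSubInv_le {s : ℝ} (h0 : 0 < s) (h1 : s ≤ π / 2) :
    |deriv cscSubInv s| ≤ 2 := by
  have hsin := half_le_sin h0.le h1
  have hsin0 : 0 < sin s := by linarith
  have hden : 0 < s ^ 2 * sin s ^ 2 := by positivity
  have heq : 1 / s ^ 2 - cos s / sin s ^ 2 = (sin s ^ 2 - s ^ 2 * cos s) / (s ^ 2 * sin s ^ 2) := by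
    field_simp
  have hnum : |sin s ^ 2 - s ^ 2 * cos s| ≤ s ^ 4 / 2 := by
    have hs2 : s ^ 2 ≤ 6 := by nlinarith [pi_le_four]
    have hlow : 0 ≤ s - s ^ 3 / 6 := by nlinarith
    have hsin_le := sin_le h0.le
    have hsin_ge := sin_ge_sub_cube h0.le
    rw [abs_le]
    constructor
    · nlinarith [mul_le_mul_of_nonneg_left (cos_le_one s) (sq_nonneg s),
        mul_le_mul hsin_ge hsin_ge hlow hsin0.le]
    · nlinarith [mul_le_mul_of_nonneg_left (one_sub_sq_div_two_le_cos (x := s)) (sq_nonneg s),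
        mul_le_mul hsin_le hsin_le hsin0.le h0.le]
  rw [(hasDerivAt_cscSubInv hsin0.ne').deriv, heq, abs_div, abs_of_pos hden,
    div_le_iff₀ hden]
  nlinarith [mul_le_mul hsin hsin (by positivity) hsin0.le]

theorem f_eq_sin_div_sin (N : ℕ) {x : ℝ} (hx : x ∈ Set.Ioo 0 (2 * π * mval N)) :
    f N x = (sin x / sin (x / (2 * mval N)) - 1) / (2 * N) := by
  have hsin := (sin_div_two_mval_pos hx).ne'
  have hsum := two_mul_sin_half_mul_sum_cos N (x / mval N)
  rw [show ((N : ℝ) + 1 / 2) * (x / mval N) = x by rw [← mval, mul_div_cancel₀ _ (mval_pos N).ne'],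
    show x / mval N / 2 = x / (2 * mval N) by ring] at hsum
  have hS : ∑ n ∈ Finset.Icc 1 N, cos (n * x / mval N)
      = (sin x - sin (x / (2 * mval N))) / (2 * sin (x / (2 * mval N))) := by
    simp only [mul_div_assoc]
    rw [eq_div_iff (by simpa using hsin)]
    linear_combination hsum
  rw [f, hS, div_sub_one hsin]
  ring

theorem sin_div_sin_eq {m x : ℝ} (hx : x ≠ 0) :
    sin x / sin (x / (2 * m)) = 2 * m * g x + sin x * cscSubInv (x / (2 * m)) := by
  simp only [g, cscSubInv]
  field_simp [hx]
  ring

theorem hasDerivAt_f (N : ℕ) {x : ℝ} (hx : x ∈ Set.Ioo 0 (2 * π * mval N)) :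
    HasDerivAt (f N) ((2 * mval N * deriv g x + cos x * cscSubInv (x / (2 * mval N))
      + sin x * deriv cscSubInv (x / (2 * mval N)) / (2 * mval N)) / (2 * N)) x := by
  have hg : HasDerivAt g (deriv g x) x := (hasDerivAt_g hx.1.ne').differentiableAt.hasDerivAt
  have hc : HasDerivAt cscSubInv (deriv cscSubInv (x / (2 * mval N))) (x / (2 * mval N)) :=
    (hasDerivAt_cscSubInv (sin_div_two_mval_pos hx).ne').differentiableAt.hasDerivAt
  have hh := hc.comp x ((hasDerivAt_id' x).div_const (2 * mval N))
  have hf : f N =ᶠ[𝓝 x]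
      fun y => (2 * mval N * g y + sin y * cscSubInv (y / (2 * mval N)) - 1) / (2 * N) := by
    filter_upwards [Ioo_mem_nhds hx.1 hx.2] with y hy
    rw [f_eq_sin_div_sin N hy, sin_div_sin_eq hy.1.ne']
  refine ((((hg.const_mul _).add ((hasDerivAt_sin x).mul hh)).sub_const 1).div_const _
    |>.congr_deriv ?_).congr_of_eventuallyEq hf
  simp only [Function.comp_apply]
  ring

theorem f_sub_g_eq {N : ℕ} (hN : N ≠ 0) {x : ℝ} (hx : x ∈ Set.Ioo 0 (2 * π * mval N)) :
    f N x - g x = (g x - 1 + sin x * cscSubInv (x / (2 * mval N))) / (2 * N) := by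
  rw [f_eq_sin_div_sin N hx, sin_div_sin_eq hx.1.ne', mval]
  field_simp
  ring

theorem deriv_f_sub_deriv_g_eq {N : ℕ} (hN : N ≠ 0) {x : ℝ}
    (hx : x ∈ Set.Ioo 0 (2 * π * mval N)) :
    deriv (f N) x - deriv g x = (deriv g x + cos x * cscSubInv (x / (2 * mval N))
      + sin x * deriv cscSubInv (x / (2 * mval N)) / (2 * mval N)) / (2 * N) := by
  rw [(hasDerivAt_f N hx).deriv, mval]
  field_simp
  ring

theorem abs_f_sub_g_le {N : ℕ} (hN : 1 ≤ N) {x : ℝ} (hx0 : 0 < x) (hx : x ≤ π * mval N) :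
    |f N x - g x| ≤ 3 / mval N := by
  obtain ⟨hs0, hs⟩ := div_two_mval_mem_Ioc hx0 hx
  rw [f_sub_g_eq (by omega) (mem_Ioo_of_le_pi_mul_mval hx0 hx)]
  refine abs_div_two_mul_le_div_mval hN ?_
  have hh := abs_cscSubInv_le hs0 hs
  calc |g x - 1 + sin x * cscSubInv (x / (2 * mval N))|
      ≤ |g x - 1| + |sin x| * |cscSubInv (x / (2 * mval N))| := by
        rw [← abs_mul]; exact abs_add_le _ _
    _ ≤ 2 + 1 * 1 := by
        gcongr
        · exact abs_g_sub_one_le x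
        · exact abs_sin_le_one x
        · linarith [pi_le_four]
    _ = 3 := by norm_num

theorem abs_deriv_f_sub_deriv_g_le {N : ℕ} (hN : 1 ≤ N) {x : ℝ} (hx0 : 0 < x)
    (hx : x ≤ π * mval N) :
    |deriv (f N) x - deriv g x| ≤ (|deriv g x| + 2 * x / mval N) / mval N := by
  obtain ⟨hs0, hs⟩ := div_two_mval_mem_Ioc hx0 hx
  have hm := mval_pos N
  rw [deriv_f_sub_deriv_g_eq (by omega) (mem_Ioo_of_le_pi_mul_mval hx0 hx)]
  refine abs_div_two_mul_le_div_mval hN ?_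
  have hcos : |cos x * cscSubInv (x / (2 * mval N))| ≤ x / (2 * mval N) / 3 := by
    rw [abs_mul]
    nlinarith [abs_cos_le_one x, abs_nonneg (cscSubInv (x / (2 * mval N))), abs_cscSubInv_le hs0 hs]
  have hsin : |sin x * deriv cscSubInv (x / (2 * mval N)) / (2 * mval N)| ≤ x / mval N := by
    rw [abs_div, abs_mul, abs_of_pos (by positivity : 0 < 2 * mval N),
      div_le_div_iff₀ (by positivity) hm]
    have := abs_sin_le_abs (x := x)
    rw [abs_of_pos hx0] at this
    have hprod := mul_le_mul this (abs_deriv_cscSubInv_le hs0 hs) (abs_nonneg _) hx0.le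
    nlinarith [mul_le_mul_of_nonneg_right hprod hm.le]
  calc _ ≤ _ := abs_add_three _ _ _
    _ ≤ |deriv g x| + x / (2 * mval N) / 3 + x / mval N := by gcongr
    _ ≤ |deriv g x| + 2 * x / mval N := by
        have : 0 < x / mval N := by positivity
        linarith [show x / (2 * mval N) / 3 = x / mval N / 6 by ring,
          show 2 * x / mval N = 2 * (x / mval N) by ring]

/-- there is a universal `C > 0` such that for every `N ≥ 1` (with `m = N + 1/2`)
and every `0 < x ≤ πm`: `|f(x) − g(x)| ≤ C/m` and
`|f'(x) − g'(x)| ≤ C·(x/m² + 1/(m·x))`; moreover for `0 < x < 1`,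
`|f'(x) − g'(x)| ≤ C·x/m`. -/
theorem f_approximates_g :
    ∃ C > (0 : ℝ), ∀ N : ℕ, 1 ≤ N → ∀ x : ℝ, 0 < x → x ≤ π * mval N →
      |f N x - g x| ≤ C / mval N ∧
      |deriv (f N) x - deriv g x| ≤ C * (x / mval N ^ 2 + 1 / (mval N * x)) ∧
      (x < 1 → |deriv (f N) x - deriv g x| ≤ C * x / mval N) := by
  refine ⟨3, by norm_num, fun N hN x hx0 hx => ?_⟩
  have hm := one_le_mval hN
  refine ⟨abs_f_sub_g_le hN hx0 hx, ?_, fun _ => ?_⟩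
  · calc |deriv (f N) x - deriv g x|
        ≤ (|deriv g x| + 2 * x / mval N) / mval N := abs_deriv_f_sub_deriv_g_le hN hx0 hx
      _ ≤ (2 / x + 2 * x / mval N) / mval N := by gcongr; exact abs_deriv_g_le_two_div hx0
      _ = 2 * (x / mval N ^ 2 + 1 / (mval N * x)) := by field_simp; ring
      _ ≤ 3 * (x / mval N ^ 2 + 1 / (mval N * x)) := by gcongr; norm_num
  · calc |deriv (f N) x - deriv g x|
        ≤ (|deriv g x| + 2 * x / mval N) / mval N := abs_deriv_f_sub_deriv_g_le hN hx0 hx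
      _ ≤ (x / 2 + 2 * x) / mval N := by
          gcongr
          · exact abs_deriv_g_le_half hx0
          · exact div_le_self (by positivity) hm
      _ ≤ 3 * x / mval N := by gcongr; linarith
end

section
/- There exists a universal constant A > 0 such that for every integer N ≥ 1 and every M with 1 ≤ M < πm/8, each of the functions r_N, r_N^M, r_N^{M,0} together with their first and second derivatives is A-Lipschitz on I_N, i.e. satisfies |h(x) − h(y)| ≤ A·|x − y| for all x, y ∈ I_N. -/
/-
Every function in question is a cosine polynomial with frequencies `n / m ∈ (0, 1)`, or such a
polynomial times `S_M`. Derivatives of a cosine polynomial are bounded by the `ℓ¹` norm of its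
coefficients, which is `1` for `r_N`. For `r_N^{M,0}` the AM-GM bound `√(ab) ≤ (a + |b|) / 2`
reduces it to `Σ |r̂_N^M(n)| ≤ 128 πm / √(2πm)`; this follows by pairing `r_N S_M` with the cosine
polynomial whose coefficients are the signs of the `r̂_N^M(n)`, by AM-GM and by Parseval.

`S_M` is a box spline: convolving with the indicator of `[-M, M]` is the window integral
`f ↦ ∫_{x-M}^{x+M} f`, whose derivative is the central difference `f(x + M) - f(x - M)`. So the
`j`-th derivative of the 8-fold convolution is a `j`-fold central difference of the `(8 - j)`-fold
one, bounded by `2^j (2M)^(7-j) ≤ 128 M^7`, while the normaliser is at least `M^7`. The Leibniz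
rule then bounds the derivatives of `r_N S_M` by `2^3 · 128`.
-/

open MeasureTheory ProbabilityTheory Filter Real Topology

noncomputable def chiM (M : ℝ) : ℝ → ℝ := (Set.Icc (-M) M).indicator 1

noncomputable def convIter (φ : ℝ → ℝ) : ℕ → (ℝ → ℝ)
  | 0 => φ
  | n + 1 => MeasureTheory.convolution (convIter φ n) φ (ContinuousLinearMap.lsmul ℝ ℝ) volume

noncomputable def SM (M : ℝ) (x : ℝ) : ℝ := convIter (chiM M) 7 x / convIter (chiM M) 7 0

noncomputable def rN (N : ℕ) (x : ℝ) : ℝ :=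
  (1 / N) * ∑ n ∈ Finset.Icc 1 N, Real.cos (n * x / mval N)

noncomputable def rNM (N : ℕ) (M : ℝ) (x : ℝ) : ℝ := rN N x * SM M x

noncomputable def rhatM (N : ℕ) (M : ℝ) (n : ℕ) : ℝ :=
  (Real.sqrt (2 * π * mval N))⁻¹ *
    ∫ x in (-(π * mval N))..(π * mval N), rNM N M x * Real.cos (n * x / mval N)


/-- `r̂_N(n) = √(πm)/(√2·N)` (for `1 ≤ n ≤ N`, which is how it is used below). -/
noncomputable def rhatN (N : ℕ) : ℝ := Real.sqrt (π * mval N) / (Real.sqrt 2 * N)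

/-- The joint covariance function
`r_N^{M,0}(x) = Σ_{n=1}^N √(r̂_N(n)·r̂_N^M(n))·(√2/√(πm))·cos(nx/m)`. -/
noncomputable def rNM0 (N : ℕ) (M : ℝ) (x : ℝ) : ℝ :=
  ∑ n ∈ Finset.Icc 1 N,
    Real.sqrt (rhatN N * rhatM N M n) * (Real.sqrt 2 / Real.sqrt (π * mval N)) *
      Real.cos (n * x / mval N)

/-- The `L²` norm of a function on `I_N = [−πm, πm]`. -/
noncomputable def l2norm (N : ℕ) (h : ℝ → ℝ) : ℝ :=
  Real.sqrt (∫ x in (-(π * mval N))..(π * mval N), h x ^ 2)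

/-- `h` is `A`-Lipschitz on the set `s`. -/
def LipOn (A : ℝ) (s : Set ℝ) (h : ℝ → ℝ) : Prop :=
  ∀ x ∈ s, ∀ y ∈ s, |h x - h y| ≤ A * |x - y|

lemma lipOn_of_hasDerivAt {f f' : ℝ → ℝ} {A : ℝ} (hf : ∀ x, HasDerivAt f (f' x) x)
    (hA : ∀ x, |f' x| ≤ A) (s : Set ℝ) : LipOn A s f := by
  intro x _ y _
  simpa only [Real.norm_eq_abs] using convex_univ.norm_image_sub_le_of_norm_hasDerivWithin_le
    (fun z _ => (hf z).hasDerivWithinAt) (fun z _ => hA z) (Set.mem_univ y) (Set.mem_univ x)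

lemma hasDerivAt_leibniz_sum {F G : ℕ → ℝ → ℝ} {k : ℕ}
    (hF : ∀ i ≤ k, ∀ x, HasDerivAt (F i) (F (i + 1) x) x)
    (hG : ∀ i ≤ k, ∀ x, HasDerivAt (G i) (G (i + 1) x) x) (x : ℝ) :
    HasDerivAt (fun y => ∑ i ∈ Finset.range (k + 1), (k.choose i : ℝ) * (F i y * G (k - i) y))
      (∑ i ∈ Finset.range (k + 2), ((k + 1).choose i : ℝ) * (F i x * G (k + 1 - i) x)) x := by
  rw [Finset.sum_choose_succ_mul (fun i j => F i x * G j x), ← Finset.sum_add_distrib]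
  refine HasDerivAt.fun_sum fun i hi => ?_
  have hik : i ≤ k := Nat.lt_succ_iff.1 (Finset.mem_range.1 hi)
  refine (((hF i hik x).mul (hG (k - i) (by omega) x)).const_mul (k.choose i : ℝ)).congr_deriv ?_
  rw [show k + 1 - i = k - i + 1 by omega]
  ring

def HasBoundedDerivs (n : ℕ) (A : ℝ) (f : ℝ → ℝ) : Prop :=
  ∃ F : ℕ → ℝ → ℝ, F 0 = f ∧ (∀ k < n, ∀ x, HasDerivAt (F k) (F (k + 1) x) x) ∧
    ∀ k ≤ n, ∀ x, |F k x| ≤ A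

namespace HasBoundedDerivs

variable {n : ℕ} {A B : ℝ} {f g : ℝ → ℝ}

lemma mono {m : ℕ} (h : HasBoundedDerivs n A f) (hmn : m ≤ n) (hAB : A ≤ B) :
    HasBoundedDerivs m B f := by
  obtain ⟨F, rfl, hd, hb⟩ := h
  exact ⟨F, rfl, fun k hk => hd k (by omega), fun k hk x => (hb k (by omega) x).trans hAB⟩

lemma lipOn (h : HasBoundedDerivs 3 A f) (s : Set ℝ) :
    LipOn A s f ∧ LipOn A s (deriv f) ∧ LipOn A s (deriv (deriv f)) := by
  obtain ⟨F, rfl, hd, hb⟩ := h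
  have h1 : deriv (F 0) = F 1 := funext fun x => (hd 0 (by norm_num) x).deriv
  have h2 : deriv (F 1) = F 2 := funext fun x => (hd 1 (by norm_num) x).deriv
  rw [h1, h2]
  exact ⟨lipOn_of_hasDerivAt (hd 0 (by norm_num)) (hb 1 (by norm_num)) s,
    lipOn_of_hasDerivAt (hd 1 (by norm_num)) (hb 2 (by norm_num)) s,
    lipOn_of_hasDerivAt (hd 2 (by norm_num)) (hb 3 le_rfl) s⟩

lemma mul (hf : HasBoundedDerivs n A f) (hg : HasBoundedDerivs n B g) :
    HasBoundedDerivs n (2 ^ n * (A * B)) (fun x => f x * g x) := by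
  obtain ⟨F, rfl, hFd, hFb⟩ := hf
  obtain ⟨G, rfl, hGd, hGb⟩ := hg
  have hA : 0 ≤ A := (abs_nonneg _).trans (hFb 0 (Nat.zero_le _) 0)
  have hB : 0 ≤ B := (abs_nonneg _).trans (hGb 0 (Nat.zero_le _) 0)
  refine ⟨fun k x => ∑ i ∈ Finset.range (k + 1), (k.choose i : ℝ) * (F i x * G (k - i) x),
    by simp, fun k hk x => hasDerivAt_leibniz_sum (fun i hi => hFd i (by omega))
      (fun i hi => hGd i (by omega)) x, fun k hk x => ?_⟩
  calc |∑ i ∈ Finset.range (k + 1), (k.choose i : ℝ) * (F i x * G (k - i) x)|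
      ≤ ∑ i ∈ Finset.range (k + 1), (k.choose i : ℝ) * (A * B) := by
        refine (Finset.abs_sum_le_sum_abs _ _).trans (Finset.sum_le_sum fun i hi => ?_)
        have hik : i ≤ k := Nat.lt_succ_iff.1 (Finset.mem_range.1 hi)
        rw [abs_mul, abs_mul, Nat.abs_cast]
        exact mul_le_mul_of_nonneg_left
          (mul_le_mul (hFb i (by omega) x) (hGb (k - i) (by omega) x) (abs_nonneg _) hA)
          (Nat.cast_nonneg _)
    _ = 2 ^ k * (A * B) := by
        rw [← Finset.sum_mul, ← Nat.cast_sum, Nat.sum_range_choose]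
        push_cast
        ring
    _ ≤ 2 ^ n * (A * B) := by gcongr; norm_num

end HasBoundedDerivs

lemma hasBoundedDerivs_sum_cos {ι : Type*} (s : Finset ι) (c ω : ι → ℝ)
    (hω : ∀ i ∈ s, |ω i| ≤ 1) (n : ℕ) :
    HasBoundedDerivs n (∑ i ∈ s, |c i|) (fun x => ∑ i ∈ s, c i * cos (ω i * x)) := by
  refine ⟨fun k x => ∑ i ∈ s, c i * ω i ^ k * cos (ω i * x + k * (π / 2)), by simp,
    fun k _ x => HasDerivAt.fun_sum fun i _ => ?_, fun k _ x => ?_⟩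
  · refine ((((hasDerivAt_id x).const_mul (ω i)).add_const (k * (π / 2))).cos.const_mul
      (c i * ω i ^ k)).congr_deriv ?_
    rw [Nat.cast_succ, add_mul, one_mul, ← add_assoc, cos_add_pi_div_two]
    simp only [id, mul_one]
    ring
  · refine (Finset.abs_sum_le_sum_abs _ _).trans (Finset.sum_le_sum fun i hi => ?_)
    rw [abs_mul, abs_mul, abs_pow]
    calc |c i| * |ω i| ^ k * |cos (ω i * x + k * (π / 2))| ≤ |c i| * 1 * 1 := by
          gcongr
          · exact pow_le_one₀ (abs_nonneg _) (hω i hi)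
          · exact abs_cos_le_one _
      _ = |c i| := by ring

section BoxSpline

variable (M : ℝ) {f : ℝ → ℝ}

noncomputable def windowIntegral (f : ℝ → ℝ) (x : ℝ) : ℝ := ∫ t in (x - M)..(x + M), f t

def centralDiff (g : ℝ → ℝ) (x : ℝ) : ℝ := g (x + M) - g (x - M)

lemma windowIntegral_eq_sub (hf : ∀ a b, IntervalIntegrable f volume a b) (x : ℝ) :
    windowIntegral M f x = (∫ t in (0 : ℝ)..(x + M), f t) - ∫ t in (0 : ℝ)..(x - M), f t :=
  (intervalIntegral.integral_interval_sub_left (hf _ _) (hf _ _)).symm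

lemma continuous_windowIntegral (hf : ∀ a b, IntervalIntegrable f volume a b) :
    Continuous (windowIntegral M f) := by
  have hF := intervalIntegral.continuous_primitive hf 0
  rw [funext (windowIntegral_eq_sub M hf)]
  exact (hF.comp (continuous_add_const M)).sub (hF.comp (continuous_sub_right M))

lemma hasDerivAt_windowIntegral (hf : Continuous f) (x : ℝ) :
    HasDerivAt (windowIntegral M f) (centralDiff M f x) x := by
  have hF (y : ℝ) := (hf.integral_hasStrictDerivAt 0 y).hasDerivAt
  rw [funext (windowIntegral_eq_sub M fun a b => hf.intervalIntegrable a b)]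
  exact ((hF _).comp_add_const x M).sub ((hF _).comp_sub_const x M)

variable {M}

lemma windowIntegral_nonneg (hM : 0 ≤ M) (hf : ∀ x, 0 ≤ f x) (x : ℝ) :
    0 ≤ windowIntegral M f x :=
  intervalIntegral.integral_nonneg (by linarith) fun t _ => hf t

lemma windowIntegral_le (hM : 0 ≤ M) (hfi : ∀ a b, IntervalIntegrable f volume a b) {C : ℝ}
    (hf : ∀ x, f x ≤ C) (x : ℝ) : windowIntegral M f x ≤ 2 * M * C :=
  calc windowIntegral M f x ≤ ∫ _ in (x - M)..(x + M), C :=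
        intervalIntegral.integral_mono_on (by linarith) (hfi _ _) intervalIntegrable_const
          fun t _ => hf t
    _ = 2 * M * C := by simp only [intervalIntegral.integral_const, smul_eq_mul]; ring

lemma le_windowIntegral (hfi : ∀ a b, IntervalIntegrable f volume a b) (hf : ∀ x, 0 ≤ f x)
    {x a b C : ℝ} (ha : x - M ≤ a) (hab : a ≤ b) (hb : b ≤ x + M)
    (hC : ∀ t ∈ Set.Icc a b, C ≤ f t) : C * (b - a) ≤ windowIntegral M f x :=
  calc C * (b - a) = ∫ _ in a..b, C := by
        simp only [intervalIntegral.integral_const, smul_eq_mul]; ring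
    _ ≤ ∫ t in a..b, f t := intervalIntegral.integral_mono_on hab intervalIntegrable_const
        (hfi _ _) hC
    _ ≤ windowIntegral M f x := intervalIntegral.integral_mono_interval ha hab hb
        (Filter.Eventually.of_forall hf) (hfi _ _)

lemma hasDerivAt_centralDiff {g g' : ℝ → ℝ} (hg : ∀ y, HasDerivAt g (g' y) y) (x : ℝ) :
    HasDerivAt (centralDiff M g) (centralDiff M g' x) x :=
  ((hg _).comp_add_const x M).sub ((hg _).comp_sub_const x M)

lemma hasDerivAt_iterate_centralDiff {g g' : ℝ → ℝ} (hg : ∀ y, HasDerivAt g (g' y) y) (k : ℕ) :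
    ∀ x, HasDerivAt ((centralDiff M)^[k] g) ((centralDiff M)^[k] g' x) x := by
  induction k with
  | zero => exact hg
  | succ k ih =>
    simp only [Function.iterate_succ_apply']
    exact hasDerivAt_centralDiff ih

lemma abs_iterate_centralDiff_le {g : ℝ → ℝ} {C : ℝ} (hg : ∀ y, |g y| ≤ C) (k : ℕ) :
    ∀ x, |(centralDiff M)^[k] g x| ≤ 2 ^ k * C := by
  induction k with
  | zero => simpa using hg
  | succ k ih =>
    intro x
    rw [Function.iterate_succ_apply', centralDiff, pow_succ]
    linarith [abs_sub (((centralDiff M)^[k] g) (x + M)) (((centralDiff M)^[k] g) (x - M)),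
      ih (x + M), ih (x - M)]

lemma convolution_chiM (hM : 0 ≤ M) (f : ℝ → ℝ) :
    convolution f (chiM M) (ContinuousLinearMap.lsmul ℝ ℝ) volume = windowIntegral M f := by
  funext x
  have hset : {t | x - t ∈ Set.Icc (-M) M} = Set.Icc (x - M) (x + M) := by
    ext t
    simp only [Set.mem_ofPred_eq, Set.mem_Icc]
    constructor <;> intro h <;> constructor <;> linarith [h.1, h.2]
  have hint : ∀ t, f t * chiM M (x - t) = (Set.Icc (x - M) (x + M)).indicator f t := by
    intro t
    simp only [chiM, Set.indicator_apply, Pi.one_apply, ← hset, Set.mem_ofPred_eq]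
    split_ifs <;> simp
  simp only [convolution_def, ContinuousLinearMap.lsmul_apply, smul_eq_mul, hint]
  rw [integral_indicator measurableSet_Icc, integral_Icc_eq_integral_Ioc, windowIntegral,
    intervalIntegral.integral_of_le (by linarith)]

lemma convIter_chiM_succ (hM : 0 ≤ M) (k : ℕ) :
    convIter (chiM M) (k + 1) = windowIntegral M (convIter (chiM M) k) :=
  convolution_chiM hM _

lemma intervalIntegrable_convIter_chiM (hM : 0 ≤ M) (k : ℕ) (a b : ℝ) :
    IntervalIntegrable (convIter (chiM M) k) volume a b := by
  induction k generalizing a b with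
  | zero =>
    refine Integrable.intervalIntegrable ?_
    exact (integrable_indicator_iff measurableSet_Icc).2 (integrableOn_const measure_Icc_lt_top.ne)
  | succ k ih =>
    rw [convIter_chiM_succ hM]
    exact (continuous_windowIntegral M ih).intervalIntegrable a b

lemma continuous_convIter_chiM (hM : 0 ≤ M) (k : ℕ) : Continuous (convIter (chiM M) (k + 1)) := by
  rw [convIter_chiM_succ hM]
  exact continuous_windowIntegral M (intervalIntegrable_convIter_chiM hM k)

lemma convIter_chiM_nonneg (hM : 0 ≤ M) (k : ℕ) (x : ℝ) : 0 ≤ convIter (chiM M) k x := by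
  induction k generalizing x with
  | zero => exact Set.indicator_nonneg (fun _ _ => zero_le_one) x
  | succ k ih => rw [convIter_chiM_succ hM]; exact windowIntegral_nonneg hM ih x

lemma convIter_chiM_le (hM : 0 ≤ M) (k : ℕ) (x : ℝ) : convIter (chiM M) k x ≤ (2 * M) ^ k := by
  induction k generalizing x with
  | zero =>
    rw [pow_zero, convIter, chiM, Set.indicator_apply]
    split_ifs <;> norm_num
  | succ k ih =>
    rw [convIter_chiM_succ hM, pow_succ']
    exact windowIntegral_le hM (intervalIntegrable_convIter_chiM hM k) ih x

lemma pow_le_convIter_chiM (hM : 0 ≤ M) (k : ℕ) {x : ℝ} (hx : x ∈ Set.Icc (-M) M) :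
    M ^ k ≤ convIter (chiM M) k x := by
  induction k generalizing x with
  | zero => simp [convIter, chiM, Set.indicator_of_mem hx]
  | succ k ih =>
    obtain ⟨hx₁, hx₂⟩ := hx
    rw [convIter_chiM_succ hM]
    have hi := intervalIntegrable_convIter_chiM hM k
    have h0 := convIter_chiM_nonneg hM k
    -- the window around `x` contains a half-window inside `[-M, M]`
    rcases le_total 0 x with hx0 | hx0
    · have := le_windowIntegral hi h0 le_rfl (by linarith : x - M ≤ x) (by linarith : x ≤ x + M)
        (C := M ^ k) fun t ht => ih ⟨by linarith [ht.1], by linarith [ht.2]⟩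
      rw [pow_succ]; linarith
    · have := le_windowIntegral hi h0 (by linarith : x - M ≤ x) (by linarith : x ≤ x + M) le_rfl
        (C := M ^ k) fun t ht => ih ⟨by linarith [ht.1], by linarith [ht.2]⟩
      rw [pow_succ]; linarith

lemma hasDerivAt_convIter_chiM (hM : 0 ≤ M) (k : ℕ) (x : ℝ) :
    HasDerivAt (convIter (chiM M) (k + 2)) (centralDiff M (convIter (chiM M) (k + 1)) x) x := by
  rw [convIter_chiM_succ hM]
  exact hasDerivAt_windowIntegral M (continuous_convIter_chiM hM k) x

end BoxSpline

lemma hasBoundedDerivs_SM {M : ℝ} (hM : 1 ≤ M) : HasBoundedDerivs 6 128 (SM M) := by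
  have hM0 : 0 ≤ M := zero_le_one.trans hM
  set B := convIter (chiM M)
  have hB70 : M ^ 7 ≤ B 7 0 := pow_le_convIter_chiM hM0 7 ⟨by linarith, hM0⟩
  have hB70_pos : 0 < B 7 0 := (pow_pos (by linarith) 7).trans_le hB70
  -- the `k`-th derivative of `B 7` is the `k`-fold central difference of `B (7 - k)`
  refine ⟨fun k x => (centralDiff M)^[k] (B (7 - k)) x / B 7 0, rfl, fun k hk x => ?_,
    fun k hk x => ?_⟩
  · dsimp only
    rw [show 7 - k = 5 - k + 2 by omega, show 7 - (k + 1) = 5 - k + 1 by omega,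
      Function.iterate_succ_apply]
    exact (hasDerivAt_iterate_centralDiff (hasDerivAt_convIter_chiM hM0 _) _ x).div_const _
  · have hBk : ∀ y, |B (7 - k) y| ≤ (2 * M) ^ (7 - k) := fun y => by
      rw [abs_of_nonneg (convIter_chiM_nonneg hM0 _ y)]
      exact convIter_chiM_le hM0 _ y
    rw [abs_div, abs_of_pos hB70_pos, div_le_iff₀ hB70_pos]
    calc |(centralDiff M)^[k] (B (7 - k)) x| ≤ 2 ^ k * (2 * M) ^ (7 - k) :=
          abs_iterate_centralDiff_le hBk k x
      _ = 2 ^ 7 * M ^ (7 - k) := by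
          rw [mul_pow, ← mul_assoc, ← pow_add, Nat.add_sub_cancel' (by omega : k ≤ 7)]
      _ ≤ 128 * B 7 0 := by
          have := pow_le_pow_right₀ hM (Nat.sub_le 7 k)
          norm_num; nlinarith

lemma continuous_SM {M : ℝ} (hM : 0 ≤ M) : Continuous (SM M) :=
  (continuous_convIter_chiM hM 6).div_const _

lemma abs_div_mval_le_one {N n : ℕ} (hn : n ∈ Finset.Icc 1 N) : |(n : ℝ) / mval N| ≤ 1 := by
  have hm : 0 < mval N := by unfold mval; positivity
  have : (n : ℝ) ≤ N := by exact_mod_cast (Finset.mem_Icc.1 hn).2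
  rw [abs_div, Nat.abs_cast, abs_of_pos hm, div_le_one hm]
  unfold mval; linarith

lemma rN_eq_sum (N : ℕ) (x : ℝ) :
    rN N x = ∑ n ∈ Finset.Icc 1 N, 1 / (N : ℝ) * cos (n * x / mval N) := by
  rw [rN, Finset.mul_sum]

lemma hasBoundedDerivs_rN {N : ℕ} (hN : 1 ≤ N) (n : ℕ) : HasBoundedDerivs n 1 (rN N) := by
  have h := hasBoundedDerivs_sum_cos (Finset.Icc 1 N) (fun _ => 1 / (N : ℝ))
    (fun n => n / mval N) (fun n hn => abs_div_mval_le_one hn) n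
  have hsum : ∑ _n ∈ Finset.Icc 1 N, |1 / (N : ℝ)| = 1 := by
    have hN' : (N : ℝ) ≠ 0 := by positivity
    simp [hN']
  convert h using 1
  · exact hsum.symm
  · funext x
    simp_rw [rN_eq_sum, mul_div_right_comm]

lemma hasBoundedDerivs_rNM {N : ℕ} (hN : 1 ≤ N) {M : ℝ} (hM : 1 ≤ M) :
    HasBoundedDerivs 3 1024 (rNM N M) := by
  have h := (hasBoundedDerivs_rN hN 3).mul ((hasBoundedDerivs_SM hM).mono (by norm_num) le_rfl)
  norm_num at h
  exact h

section Parseval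

variable {m : ℝ}

lemma integral_cos_int_mul_div (hm : m ≠ 0) (j : ℤ) :
    ∫ x in -(π * m)..π * m, cos (j * x / m) = if j = 0 then 2 * (π * m) else 0 := by
  split_ifs with hj
  · simp [hj]; ring
  have hc : (j : ℝ) / m ≠ 0 := div_ne_zero (Int.cast_ne_zero.2 hj) hm
  simp_rw [mul_div_right_comm (j : ℝ)]
  rw [intervalIntegral.integral_comp_mul_left (fun y => cos y) hc, integral_cos,
    show (j : ℝ) / m * (π * m) = j * π by field_simp,
    show (j : ℝ) / m * -(π * m) = -(j * π) by field_simp, sin_neg, sin_int_mul_pi]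
  simp

lemma integral_cos_mul_cos (hm : m ≠ 0) {k l : ℕ} (hk : k ≠ 0) :
    ∫ x in -(π * m)..π * m, cos (k * x / m) * cos (l * x / m) = if k = l then π * m else 0 := by
  have hprod : ∀ x : ℝ, cos (k * x / m) * cos (l * x / m) =
      (cos ((k - l : ℤ) * x / m) + cos ((k + l : ℤ) * x / m)) / 2 := fun x => by
    push_cast
    rw [show ((k : ℝ) - l) * x / m = k * x / m - l * x / m by ring,
      show ((k : ℝ) + l) * x / m = k * x / m + l * x / m by ring, ← two_mul_cos_mul_cos]
    ring
  have hcont : ∀ j : ℤ, IntervalIntegrable (fun x => cos (j * x / m)) volume (-(π * m)) (π * m) :=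
    fun j => (by fun_prop : Continuous _).intervalIntegrable _ _
  simp_rw [hprod]
  rw [intervalIntegral.integral_div, intervalIntegral.integral_add (hcont _) (hcont _),
    integral_cos_int_mul_div hm, integral_cos_int_mul_div hm]
  have hkl : (k + l : ℤ) ≠ 0 := by omega
  by_cases h : k = l
  · subst h
    simp [hk]
  · simp [h, hkl, sub_eq_zero]

lemma integral_sq_sum_cos (hm : m ≠ 0) {S : Finset ℕ} (hS : 0 ∉ S) (c : ℕ → ℝ) :
    ∫ x in -(π * m)..π * m, (∑ n ∈ S, c n * cos (n * x / m)) ^ 2 = π * m * ∑ n ∈ S, c n ^ 2 := by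
  have hint : ∀ i j : ℕ, IntervalIntegrable
      (fun x => c i * cos (i * x / m) * (c j * cos (j * x / m))) volume (-(π * m)) (π * m) :=
    fun i j => (by fun_prop : Continuous _).intervalIntegrable _ _
  have hint' : ∀ i ∈ S, IntervalIntegrable
      (fun x => ∑ j ∈ S, c i * cos (i * x / m) * (c j * cos (j * x / m))) volume
      (-(π * m)) (π * m) :=
    fun i _ => (by fun_prop : Continuous _).intervalIntegrable _ _
  simp_rw [sq, Finset.sum_mul_sum]
  rw [intervalIntegral.integral_finsetSum hint']
  simp_rw [intervalIntegral.integral_finsetSum fun j _ => hint _ j, mul_mul_mul_comm,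
    intervalIntegral.integral_const_mul]
  rw [Finset.mul_sum]
  refine Finset.sum_congr rfl fun i hi => ?_
  simp_rw [integral_cos_mul_cos hm (ne_of_mem_of_not_mem hi hS), mul_ite, mul_zero,
    Finset.sum_ite_eq, if_pos hi]
  ring

end Parseval

lemma sum_abs_integral_rN_mul_cos_le {N : ℕ} (hN : 1 ≤ N) {φ : ℝ → ℝ} (hφ : Continuous φ)
    {B : ℝ} (hB : ∀ x, |φ x| ≤ B) :
    ∑ n ∈ Finset.Icc 1 N, |∫ x in -(π * mval N)..π * mval N, rN N x * φ x * cos (n * x / mval N)|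
      ≤ B * (π * mval N) := by
  have hm : 0 < mval N := by unfold mval; positivity
  have hL : 0 ≤ π * mval N := by positivity
  have hN' : (0 : ℝ) < N := by exact_mod_cast hN
  have hB0 : 0 ≤ B := (abs_nonneg _).trans (hB 0)
  have hS : 0 ∉ Finset.Icc 1 N := by simp
  set a : ℕ → ℝ :=
    fun n => ∫ x in -(π * mval N)..π * mval N, rN N x * φ x * cos (n * x / mval N)
  -- test `rN N * φ` against the cosine polynomial with the signs of its coefficients
  set σ : ℕ → ℝ := fun n => if 0 ≤ a n then 1 else -1
  set h : ℝ → ℝ := fun x => ∑ n ∈ Finset.Icc 1 N, σ n * cos (n * x / mval N)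
  have hrN : Continuous (rN N) := by rw [funext (rN_eq_sum N)]; fun_prop
  have hσ : ∀ n, |a n| = σ n * a n := fun n => by
    by_cases h : 0 ≤ a n
    · simp [σ, h, abs_of_nonneg h]
    · simp [σ, h, abs_of_neg (not_le.1 h)]
  have hσ_sq : ∑ n ∈ Finset.Icc 1 N, σ n ^ 2 = N := by
    have : ∀ n, σ n ^ 2 = 1 := fun n => by by_cases h : 0 ≤ a n <;> simp [σ, h]
    simp [this]
  have hsum : ∑ n ∈ Finset.Icc 1 N, |a n|
      = ∫ x in -(π * mval N)..π * mval N, rN N x * φ x * h x := by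
    simp_rw [hσ, a, h, Finset.mul_sum, ← intervalIntegral.integral_const_mul]
    rw [intervalIntegral.integral_finsetSum fun n _ =>
      (by fun_prop : Continuous _).intervalIntegrable _ _]
    exact Finset.sum_congr rfl fun n _ => intervalIntegral.integral_congr fun x _ => by ring
  have hrN_sq : ∫ x in -(π * mval N)..π * mval N, rN N x ^ 2 = π * mval N / N := by
    simp_rw [rN_eq_sum, integral_sq_sum_cos hm.ne' hS]
    simp
    field_simp
  have hh_sq : ∫ x in -(π * mval N)..π * mval N, h x ^ 2 = π * mval N * N := by
    rw [integral_sq_sum_cos hm.ne' hS, hσ_sq]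
  have hpt : ∀ x, rN N x * φ x * h x ≤ B / 2 * (N * rN N x ^ 2 + h x ^ 2 / N) := fun x => by
    have hamgm : 2 * (|rN N x| * |h x|) ≤ N * rN N x ^ 2 + h x ^ 2 / N := by
      have := div_nonneg (sq_nonneg (N * |rN N x| - |h x|)) hN'.le
      rw [← sq_abs (rN N x), ← sq_abs (h x)]
      have e : (N * |rN N x| - |h x|) ^ 2 / N
          = N * |rN N x| ^ 2 + |h x| ^ 2 / N - 2 * (|rN N x| * |h x|) := by
        field_simp; ring
      linarith
    calc rN N x * φ x * h x ≤ |rN N x * φ x * h x| := le_abs_self _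
      _ = |rN N x| * |φ x| * |h x| := by rw [abs_mul, abs_mul]
      _ ≤ |rN N x| * B * |h x| := by gcongr; exact hB x
      _ ≤ B / 2 * (N * rN N x ^ 2 + h x ^ 2 / N) := by
          nlinarith [mul_le_mul_of_nonneg_left hamgm hB0]
  have hh : Continuous h := by fun_prop
  rw [hsum]
  calc ∫ x in -(π * mval N)..π * mval N, rN N x * φ x * h x
      ≤ ∫ x in -(π * mval N)..π * mval N, B / 2 * (N * rN N x ^ 2 + h x ^ 2 / N) :=
        intervalIntegral.integral_mono_on (by linarith)
          ((by fun_prop : Continuous _).intervalIntegrable _ _)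
          ((by fun_prop : Continuous _).intervalIntegrable _ _) fun x _ => hpt x
    _ = B / 2 * (N * ∫ x in -(π * mval N)..π * mval N, rN N x ^ 2)
          + B / 2 * ((∫ x in -(π * mval N)..π * mval N, h x ^ 2) / N) := by
        rw [intervalIntegral.integral_const_mul, intervalIntegral.integral_add
          ((by fun_prop : Continuous _).intervalIntegrable _ _)
          ((by fun_prop : Continuous _).intervalIntegrable _ _),
          intervalIntegral.integral_const_mul, intervalIntegral.integral_div]
        ring
    _ = B * (π * mval N) := by rw [hrN_sq, hh_sq]; field_simp; ring

lemma sum_abs_rhatM_le {N : ℕ} (hN : 1 ≤ N) {M : ℝ} (hM : 1 ≤ M) :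
    ∑ n ∈ Finset.Icc 1 N, |rhatM N M n| ≤ 128 * (π * mval N) / √(2 * π * mval N) := by
  have hSM : ∀ x, |SM M x| ≤ 128 := by
    obtain ⟨F, hF0, -, hb⟩ := hasBoundedDerivs_SM hM
    rw [← hF0]
    exact hb 0 (by norm_num)
  unfold rhatM
  simp only [inv_mul_eq_div, abs_div, abs_of_nonneg (Real.sqrt_nonneg _), ← Finset.sum_div]
  gcongr
  exact sum_abs_integral_rN_mul_cos_le hN (continuous_SM (by linarith)) hSM

lemma sqrt_mul_le_add_abs_div_two {a b : ℝ} (ha : 0 ≤ a) : √(a * b) ≤ (a + |b|) / 2 := by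
  rw [Real.sqrt_le_left (by positivity)]
  nlinarith [sq_nonneg (a - |b|), le_abs_self b, abs_nonneg b]

lemma hasBoundedDerivs_rNM0 {N : ℕ} (hN : 1 ≤ N) {M : ℝ} (hM : 1 ≤ M) (n : ℕ) :
    HasBoundedDerivs n (129 / 2) (rNM0 N M) := by
  set q := √2 / √(π * mval N)
  have hpm : 0 < π * mval N := by unfold mval; positivity
  have hq : 0 ≤ q := by positivity
  have ha : 0 ≤ rhatN N := by unfold rhatN; positivity
  have h := hasBoundedDerivs_sum_cos (Finset.Icc 1 N) (fun n => √(rhatN N * rhatM N M n) * q)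
    (fun n => n / mval N) (fun n hn => abs_div_mval_le_one hn) n
  have hf : rNM0 N M = fun x => ∑ n ∈ Finset.Icc 1 N,
      √(rhatN N * rhatM N M n) * q * cos (n / mval N * x) :=
    funext fun x => by simp_rw [rNM0, mul_div_right_comm]; rfl
  rw [hf]
  refine h.mono le_rfl ?_
  have hNa : N * rhatN N * q = 1 := by
    have : (N : ℝ) ≠ 0 := by positivity
    simp only [rhatN, q]
    field_simp
  have hbq : 128 * (π * mval N) / √(2 * π * mval N) * q = 128 := by
    rw [mul_assoc 2, Real.sqrt_mul (by norm_num)]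
    simp only [q]
    field_simp
    rw [Real.sq_sqrt hpm.le]
  calc ∑ n ∈ Finset.Icc 1 N, |√(rhatN N * rhatM N M n) * q|
      = ∑ n ∈ Finset.Icc 1 N, √(rhatN N * rhatM N M n) * q :=
        Finset.sum_congr rfl fun _ _ => abs_of_nonneg (by positivity)
    _ ≤ ∑ n ∈ Finset.Icc 1 N, (rhatN N + |rhatM N M n|) / 2 * q := by
        gcongr with n
        exact sqrt_mul_le_add_abs_div_two ha
    _ = (N * rhatN N * q + (∑ n ∈ Finset.Icc 1 N, |rhatM N M n|) * q) / 2 := by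
        rw [← Finset.sum_mul, ← Finset.sum_div, Finset.sum_add_distrib, Finset.sum_const,
          Nat.card_Icc, nsmul_eq_mul, Nat.add_sub_cancel]
        ring
    _ ≤ (1 + 128) / 2 := by
        rw [hNa, ← hbq]
        gcongr
        exact sum_abs_rhatM_le hN hM
    _ = 129 / 2 := by norm_num

/-- there is a universal `A > 0` such that for every `N ≥ 1` and
`1 ≤ M < πm/8`, each of `r_N`, `r_N^M`, `r_N^{M,0}` together with their first and second
derivatives is `A`-Lipschitz on `I_N = [−πm, πm]`. -/
theorem covariances_uniformly_lipschitz :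
    ∃ A > (0 : ℝ), ∀ N : ℕ, 1 ≤ N → ∀ M : ℝ, 1 ≤ M → M < π * mval N / 8 →
      LipOn A (Set.Icc (-(π * mval N)) (π * mval N)) (rN N) ∧
      LipOn A (Set.Icc (-(π * mval N)) (π * mval N)) (deriv (rN N)) ∧
      LipOn A (Set.Icc (-(π * mval N)) (π * mval N)) (deriv (deriv (rN N))) ∧
      LipOn A (Set.Icc (-(π * mval N)) (π * mval N)) (rNM N M) ∧
      LipOn A (Set.Icc (-(π * mval N)) (π * mval N)) (deriv (rNM N M)) ∧
      LipOn A (Set.Icc (-(π * mval N)) (π * mval N)) (deriv (deriv (rNM N M))) ∧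
      LipOn A (Set.Icc (-(π * mval N)) (π * mval N)) (rNM0 N M) ∧
      LipOn A (Set.Icc (-(π * mval N)) (π * mval N)) (deriv (rNM0 N M)) ∧
      LipOn A (Set.Icc (-(π * mval N)) (π * mval N)) (deriv (deriv (rNM0 N M))) := by
  refine ⟨1024, by norm_num, fun N hN M hM _ => ?_⟩
  set I := Set.Icc (-(π * mval N)) (π * mval N)
  have hrN := (hasBoundedDerivs_rN hN 3).mono (B := 1024) le_rfl (by norm_num)
  have hrNM0 := (hasBoundedDerivs_rNM0 hN hM 3).mono (B := 1024) le_rfl (by norm_num)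
  obtain ⟨h₁, h₂, h₃⟩ := hrN.lipOn I
  obtain ⟨h₄, h₅, h₆⟩ := (hasBoundedDerivs_rNM hN hM).lipOn I
  obtain ⟨h₇, h₈, h₉⟩ := hrNM0.lipOn I
  exact ⟨h₁, h₂, h₃, h₄, h₅, h₆, h₇, h₈, h₉⟩
end
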